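/- arXiv:0707.1774 — 2 statements merged into one kernel-verified Lean document; each statement's English description precedes it below -/
import Mathlib

section
/- Let H be a Hilbert space and T a bounded operator on H with ‖T‖ < 1 (a strict contraction). Define K(T) : H → ℓ²(ℕ, H) by (K(T)h)(n) = (I - T*T)^{1/2} (T^n h). Then K(T) is a well-defined isometry. -/
/-!
The defect identity `‖Δ x‖² = ‖x‖² - ‖T x‖²`, which is `Δ*Δ = I - T*T` read on the diagonal,
makes `‖Δ Tⁿ h‖²` telescope to `‖h‖² - ‖T^N h‖²`, and `T^N h → 0` because `‖T‖ < 1`.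
So `n ↦ Δ Tⁿ h` is square-summable with total `‖h‖²`.
-/

open Filter Topology ContinuousLinearMap

theorem hasSum_sub_succ_of_antitone {a : ℕ → ℝ} {l : ℝ} (ha : Antitone a)
    (hl : Tendsto a atTop (𝓝 l)) : HasSum (fun n => a n - a (n + 1)) (a 0 - l) := by
  refine (hasSum_iff_tendsto_nat_of_nonneg (fun n => sub_nonneg.2 (ha n.le_succ)) _).2 ?_
  simp only [Finset.sum_range_sub']
  exact tendsto_const_nhds.sub hl

theorem tendsto_pow_apply_nhds_zero_of_norm_lt_one {𝕜 E : Type*} [NontriviallyNormedField 𝕜]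
    [NormedAddCommGroup E] [NormedSpace 𝕜 E] {T : E →L[𝕜] E} (hT : ‖T‖ < 1) (x : E) :
    Tendsto (fun n => (T ^ n) x) atTop (𝓝 0) := by
  have h := ((apply 𝕜 E x).continuous.tendsto 0).comp
    (tendsto_pow_atTop_nhds_zero_of_norm_lt_one hT)
  rwa [map_zero] at h

section Defect

variable {𝕜 E F G : Type*} [RCLike 𝕜]
  [NormedAddCommGroup E] [InnerProductSpace 𝕜 E] [CompleteSpace E]
  [NormedAddCommGroup F] [InnerProductSpace 𝕜 F] [CompleteSpace F]
  [NormedAddCommGroup G] [InnerProductSpace 𝕜 G] [CompleteSpace G]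

theorem norm_sq_apply_eq_sub_of_adjoint_comp_self {A : E →L[𝕜] F} {B : E →L[𝕜] G}
    (h : adjoint A ∘L A = 1 - adjoint B ∘L B) (x : E) :
    ‖A x‖ ^ 2 = ‖x‖ ^ 2 - ‖B x‖ ^ 2 := by
  rw [apply_norm_sq_eq_inner_adjoint_right, apply_norm_sq_eq_inner_adjoint_right, h,
    sub_apply, one_apply_eq_self, inner_sub_right, map_sub, ← inner_self_eq_norm_sq (𝕜 := 𝕜)]

theorem hasSum_norm_sq_apply_pow {A : E →L[𝕜] F} {T : E →L[𝕜] E}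
    (h : adjoint A ∘L A = 1 - adjoint T ∘L T) {x : E}
    (hx : Tendsto (fun n => (T ^ n) x) atTop (𝓝 0)) :
    HasSum (fun n => ‖A ((T ^ n) x)‖ ^ 2) (‖x‖ ^ 2) := by
  have defect := norm_sq_apply_eq_sub_of_adjoint_comp_self h
  have hstep (n : ℕ) : (T ^ (n + 1)) x = T ((T ^ n) x) := by rw [pow_succ', mul_apply_eq_comp]
  have hanti : Antitone fun n => ‖(T ^ n) x‖ ^ 2 := by
    refine antitone_nat_of_succ_le fun n => ?_
    rw [hstep, ← sub_nonneg, ← defect]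
    positivity
  have hlim : Tendsto (fun n => ‖(T ^ n) x‖ ^ 2) atTop (𝓝 0) := by
    simpa using (hx.norm.pow 2)
  simpa only [hstep, ← defect, pow_zero, one_apply_eq_self, sub_zero] using
    hasSum_sub_succ_of_antitone hanti hlim

end Defect

namespace lp

variable {𝕜 ι E F : Type*} [RCLike 𝕜] [NormedAddCommGroup E] [NormedSpace 𝕜 E]
  [NormedAddCommGroup F] [NormedSpace 𝕜 F]

theorem norm_sq_eq_of_hasSum {f : lp (fun _ : ι => F) 2} {c : ℝ} (hc : 0 ≤ c)
    (h : HasSum (fun i => ‖f i‖ ^ 2) (c ^ 2)) : ‖f‖ = c := by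
  have hf := hasSum_norm (p := 2) (by norm_num) f
  simp only [ENNReal.toReal_ofNat, Real.rpow_two] at hf
  exact (sq_eq_sq₀ (norm_nonneg f) hc).1 (hf.unique h)

def linearIsometryOfHasSum (f : ι → E →L[𝕜] F)
    (hf : ∀ x, HasSum (fun i => ‖f i x‖ ^ 2) (‖x‖ ^ 2)) : E →ₗᵢ[𝕜] lp (fun _ : ι => F) 2 where
  toFun x := ⟨fun i => f i x, memℓp_gen (by simpa using (hf x).summable)⟩
  map_add' x y := lp.ext <| funext fun i => map_add (f i) x y
  map_smul' c x := lp.ext <| funext fun i => map_smul (f i) c x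
  norm_map' x := norm_sq_eq_of_hasSum (norm_nonneg x) (hf x)

theorem linearIsometryOfHasSum_apply (f : ι → E →L[𝕜] F)
    (hf : ∀ x, HasSum (fun i => ‖f i x‖ ^ 2) (‖x‖ ^ 2)) (x : E) (i : ι) :
    linearIsometryOfHasSum f hf x i = f i x :=
  rfl

end lp

open ContinuousLinearMap in
/-- For a strict contraction `T`, the Poisson kernel
`(K(T)h)(n) = (I - T*T)^{1/2} T^n h` is a well-defined isometry `H → ℓ²(ℕ, H)`. -/
theorem poisson_kernel_isometry
    {H : Type*} [NormedAddCommGroup H] [InnerProductSpace ℂ H] [CompleteSpace H]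
    (T Δ : H →L[ℂ] H) (hT : ‖T‖ < 1)
    (hΔpos : 0 ≤ Δ) (hΔsq : Δ * Δ = 1 - adjoint T * T) :
    ∃ K : H →L[ℂ] lp (fun _ : ℕ => H) 2,
      (∀ (h : H) (n : ℕ), K h n = Δ ((T ^ n) h)) ∧ (∀ h : H, ‖K h‖ = ‖h‖) := by
  have hΔ : adjoint Δ ∘L Δ = 1 - adjoint T ∘L T := by
    rw [((nonneg_iff_isPositive Δ).1 hΔpos).isSelfAdjoint.adjoint_eq]
    exact hΔsq
  have hsum (h : H) : HasSum (fun n => ‖(Δ ∘L T ^ n) h‖ ^ 2) (‖h‖ ^ 2) :=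
    hasSum_norm_sq_apply_pow hΔ (tendsto_pow_apply_nhds_zero_of_norm_lt_one hT h)
  exact ⟨(lp.linearIsometryOfHasSum _ hsum).toContinuousLinearMap,
    lp.linearIsometryOfHasSum_apply _ hsum, (lp.linearIsometryOfHasSum _ hsum).norm_map⟩
end

section
/- Let H be a Hilbert space and T ∈ B(H) with ‖T‖ < 1 and K(T) the Poisson kernel into ℓ²(ℕ, H) as above. Then ‖p(T)‖ ≤ sup_{|z| ≤ 1} |p(z)| for every polynomial p (von Neumann's inequality for strict contractions), deduced from p(T) = K(T)* p(S) K(T) and ‖p(S)‖ = sup_{|z|≤1} |p(z)|. -/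
/-!
For `‖T‖ < 1` and `|z| = 1` the operator Poisson kernel
`P(z, T) = ∑_{n ≥ 0} z̄ⁿ Tⁿ + ∑_{n ≥ 1} zⁿ T⋆ⁿ` factors as `w⋆ (1 - T⋆T) w` with `w = (1 - z̄T)⁻¹`,
so it is positive, and by orthogonality of the characters `zᵐ z̄ⁿ` its circle average against `zᵐ`
is `Tᵐ`. Hence `p(T)` is the circle average of `p(z) P(z, T)`, a function bounded by `M` averaged
against a positive operator-valued density of mass one; such an average has norm at most `M`
because `|⟪P x, y⟫| ≤ (⟪P x, x⟫ + ⟪P y, y⟫) / 2` for `P ≥ 0`. This is the scalar form of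
`p(T) = K(T)⋆ p(S) K(T)`: `⟪P(z, T) x, x⟫ = ‖(1 - T⋆T)^{1/2} w x‖²` is the density on the circle
of `‖K(T) x‖²`.
-/

open Complex Real ComplexConjugate Metric
open scoped InnerProductSpace

section Circle

theorem circleAverage_pow_mul_conj_pow (m n : ℕ) :
    circleAverage (fun z : ℂ => z ^ m * conj z ^ n) 0 1 = if m = n then 1 else 0 := by
  have hexp : ∀ θ : ℝ, circleMap 0 1 θ ^ m * conj (circleMap 0 1 θ) ^ n
      = cexp (((m : ℤ) - n : ℤ) * I * θ) := by
    intro θ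
    simp only [circleMap_zero, ofReal_one, one_mul, ← exp_conj, map_mul, conj_ofReal, conj_I,
      ← Complex.exp_nat_mul, ← Complex.exp_add]
    push_cast
    ring_nf
  rw [circleAverage_def]
  simp_rw [hexp]
  split_ifs with hmn
  · simp only [hmn, sub_self, Int.cast_zero, zero_mul, Complex.exp_zero,
      intervalIntegral.integral_const, sub_zero]
    rw [smul_smul, inv_mul_cancel₀ two_pi_pos.ne', one_smul]
  · have hc : ((m : ℤ) - n : ℤ) * I ≠ 0 := by simp [sub_eq_zero, hmn]
    have h2π : cexp (((m : ℤ) - n : ℤ) * I * (2 * π : ℝ)) = 1 := by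
      rw [← exp_int_mul_two_pi_mul_I ((m : ℤ) - n)]; push_cast; ring_nf
    rw [integral_exp_mul_complex hc, h2π]
    simp

theorem circleAverage_pow (k : ℕ) :
    circleAverage (fun z : ℂ => z ^ k) 0 1 = if k = 0 then 1 else 0 := by
  simpa using circleAverage_pow_mul_conj_pow k 0

variable {E : Type*} [NormedAddCommGroup E] [NormedSpace ℂ E] [CompleteSpace E]

theorem continuousOn_tsum_smul {s : Set ℂ} {c : ℕ → ℂ → ℂ} (hc : ∀ n, ContinuousOn (c n) s)
    (hc_le : ∀ n, ∀ z ∈ s, ‖c n z‖ ≤ 1) {a : ℕ → E} (ha : Summable (‖a ·‖)) :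
    ContinuousOn (fun z => ∑' n, c n z • a n) s :=
  continuousOn_tsum (fun n => (hc n).smul continuousOn_const) ha fun n z hz => by
    simpa [norm_smul] using mul_le_of_le_one_left (norm_nonneg _) (hc_le n z hz)

theorem circleAverage_tsum_smul {c : ℕ → ℂ → ℂ} (hc : ∀ n, ContinuousOn (c n) (sphere 0 1))
    (hc_le : ∀ n, ∀ z ∈ sphere (0 : ℂ) 1, ‖c n z‖ ≤ 1) {a : ℕ → E} (ha : Summable (‖a ·‖)) :
    circleAverage (fun z => ∑' n, c n z • a n) 0 1 = ∑' n, circleAverage (c n) 0 1 • a n := by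
  have hbound : ∀ n θ, ‖c n (circleMap 0 1 θ) • a n‖ ≤ ‖a n‖ := fun n θ => by
    simpa [norm_smul] using mul_le_of_le_one_left (norm_nonneg _) (hc_le n _ (by simp))
  have hcont : ∀ n, Continuous fun θ => c n (circleMap 0 1 θ) := fun n =>
    (hc n).comp_continuous (continuous_circleMap 0 1) fun θ => by simp
  have hsum := intervalIntegral.hasSum_integral_of_dominated_convergence
    (F := fun n θ => c n (circleMap 0 1 θ) • a n) (f := fun θ => ∑' n, c n (circleMap 0 1 θ) • a n)
    (μ := MeasureTheory.volume) (a := 0) (b := 2 * π) (fun n _ => ‖a n‖)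
    (fun n => ((hcont n).smul continuous_const).aestronglyMeasurable)
    (fun n => .of_forall fun θ _ => hbound n θ) (.of_forall fun _ _ => ha) intervalIntegrable_const
    (.of_forall fun θ _ => (ha.of_norm_bounded (hbound · θ)).hasSum)
  simp only [intervalIntegral.integral_smul_const] at hsum
  simp only [circleAverage_def, ← hsum.tsum_eq, smul_assoc, ← tsum_const_smul'']

end Circle

section CStarAlgebra

variable {A : Type*} [CStarAlgebra A] {T : A}

noncomputable def operatorPoissonKernel (T : A) (z : ℂ) : A :=
  ∑' n, conj z ^ n • T ^ n + ∑' n, z ^ (n + 1) • star T ^ (n + 1)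

theorem summable_norm_pow_star_succ (hT : ‖T‖ < 1) : Summable fun n => ‖star T ^ (n + 1)‖ :=
  (summable_nat_add_iff 1).2 (summable_norm_geometric_of_norm_lt_one (by rwa [norm_star]))

theorem continuousOn_operatorPoissonKernel (hT : ‖T‖ < 1) :
    ContinuousOn (operatorPoissonKernel T) (closedBall 0 1) := by
  have hle : ∀ k : ℕ, ∀ z ∈ closedBall (0 : ℂ) 1, ‖z‖ ^ k ≤ 1 := fun k z hz =>
    pow_le_one₀ (norm_nonneg z) (by simpa using hz)
  have h₁ := continuousOn_tsum_smul (c := fun n z => conj z ^ n) (a := fun n => T ^ n)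
    (fun n => (Complex.continuous_conj.pow n).continuousOn)
    (fun n z hz => by simpa using hle n z hz) (summable_norm_geometric_of_norm_lt_one hT)
  have h₂ := continuousOn_tsum_smul (c := fun n (z : ℂ) => z ^ (n + 1))
    (a := fun n => star T ^ (n + 1)) (fun n => (continuous_pow (n + 1)).continuousOn)
    (fun n z hz => by simpa using hle (n + 1) z hz) (summable_norm_pow_star_succ hT)
  exact h₁.add h₂

theorem circleAverage_pow_smul_operatorPoissonKernel (hT : ‖T‖ < 1) (m : ℕ) :
    circleAverage (fun z => z ^ m • operatorPoissonKernel T z) 0 1 = T ^ m := by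
  have hc : ∀ k l : ℕ, ContinuousOn (fun z : ℂ => z ^ k * conj z ^ l) (sphere 0 1) :=
    fun k l => by fun_prop
  have hc_le : ∀ k l : ℕ, ∀ z ∈ sphere (0 : ℂ) 1, ‖z ^ k * conj z ^ l‖ ≤ 1 := fun k l z hz => by
    simp_all
  have hT₁ := summable_norm_geometric_of_norm_lt_one hT
  have hT₂ := summable_norm_pow_star_succ hT
  have hP : (fun z => z ^ m • operatorPoissonKernel T z) = fun z =>
      ∑' n, (z ^ m * conj z ^ n) • T ^ n +
        ∑' n, (z ^ (m + n + 1) * conj z ^ 0) • star T ^ (n + 1) := by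
    ext z
    simp only [operatorPoissonKernel, smul_add, ← tsum_const_smul'', smul_smul, pow_zero, mul_one,
      ← pow_add, add_assoc]
  have hc₂ := fun n => hc (m + n + 1) 0
  have hc₂_le := fun n => hc_le (m + n + 1) 0
  rw [hP, circleAverage_fun_add
      ((continuousOn_tsum_smul (hc m) (hc_le m) hT₁).circleIntegrable zero_le_one)
      ((continuousOn_tsum_smul hc₂ hc₂_le hT₂).circleIntegrable zero_le_one),
    circleAverage_tsum_smul (hc m) (hc_le m) hT₁, circleAverage_tsum_smul hc₂ hc₂_le hT₂]
  simp [circleAverage_pow_mul_conj_pow, circleAverage_pow]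

theorem operatorPoissonKernel_eq_star_mul_mul {z : ℂ} (hT : ‖T‖ < 1) (hz : ‖z‖ = 1) :
    operatorPoissonKernel T z =
      star (∑' n, (conj z • T) ^ n) * (1 - star T * T) * ∑' n, (conj z • T) ^ n := by
  set w := ∑' n, (conj z • T) ^ n
  have hzT : ‖conj z • T‖ < 1 := by simpa [norm_smul, hz] using hT
  have hTw : T * w = z • (w - 1) := by
    have h : (1 - conj z • T) * w = 1 := mul_neg_geom_series _ hzT
    rw [sub_mul, one_mul, smul_mul_assoc] at h
    rw [← h, sub_sub_cancel, smul_smul, mul_conj', hz, ofReal_one, one_pow, one_smul]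
  have hstar : star w = ∑' n, (z • star T) ^ n := by
    simp [w, tsum_star, star_pow, star_smul]
  have h₁ : ∑' n, conj z ^ n • T ^ n = w := by simp [w, smul_pow]
  have h₂ : ∑' n, z ^ (n + 1) • star T ^ (n + 1) = star w - 1 := by
    rw [hstar, ← geom_series_succ _ (by simpa [norm_smul, hz] using hT)]
    simp [smul_pow]
  have hTw' : star (T * w) * (T * w) = (star w - 1) * (w - 1) := by
    rw [hTw, star_smul, smul_mul_smul_comm, star_sub, star_one, star_def, conj_mul', hz, ofReal_one,
      one_pow, one_smul]
  rw [operatorPoissonKernel, h₁, h₂, mul_sub, sub_mul, mul_one,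
    show star w * (star T * T) * w = star (T * w) * (T * w) by rw [star_mul]; noncomm_ring, hTw']
  noncomm_ring

theorem operatorPoissonKernel_nonneg [PartialOrder A] [StarOrderedRing A] {z : ℂ} (hT : ‖T‖ < 1)
    (hz : ‖z‖ = 1) : 0 ≤ operatorPoissonKernel T z := by
  have hTT : star T * T ≤ 1 :=
    (CStarAlgebra.norm_le_one_iff_of_nonneg _ (star_mul_self_nonneg T)).1 <| by
      rw [CStarRing.norm_star_mul_self]; nlinarith [norm_nonneg T]
  rw [operatorPoissonKernel_eq_star_mul_mul hT hz]
  exact star_left_conjugate_nonneg (sub_nonneg.2 hTT) _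

theorem circleAverage_eval_smul_operatorPoissonKernel (hT : ‖T‖ < 1) (p : Polynomial ℂ) :
    circleAverage (fun z => p.eval z • operatorPoissonKernel T z) 0 1 = Polynomial.aeval T p := by
  have hint : ∀ i : ℕ,
      CircleIntegrable (fun z => (p.coeff i * z ^ i) • operatorPoissonKernel T z) 0 1 := fun i =>
    ((Continuous.continuousOn (by fun_prop)).smul
      ((continuousOn_operatorPoissonKernel hT).mono sphere_subset_closedBall)).circleIntegrable
        zero_le_one
  simp only [Polynomial.eval_eq_sum_range, Finset.sum_smul]
  rw [circleAverage_fun_sum fun i _ => hint i, Polynomial.aeval_eq_sum_range]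
  refine Finset.sum_congr rfl fun i _ => ?_
  simp only [mul_smul, circleAverage_fun_smul, circleAverage_pow_smul_operatorPoissonKernel hT]

theorem circleAverage_operatorPoissonKernel (hT : ‖T‖ < 1) :
    circleAverage (operatorPoissonKernel T) 0 1 = 1 := by
  simpa using circleAverage_pow_smul_operatorPoissonKernel hT 0

end CStarAlgebra

section Hilbert

variable {H : Type*} [NormedAddCommGroup H] [InnerProductSpace ℂ H] [CompleteSpace H]

open ContinuousLinearMap

theorem norm_inner_le_of_nonneg {P : H →L[ℂ] H} (hP : 0 ≤ P) (x y : H) :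
    ‖⟪P x, y⟫_ℂ‖ ≤ (re ⟪P x, x⟫_ℂ + re ⟪P y, y⟫_ℂ) / 2 := by
  obtain ⟨S, rfl⟩ := CStarAlgebra.nonneg_iff_eq_star_mul_self.1 hP
  simp only [star_eq_adjoint, mul_apply_eq_comp, adjoint_inner_left]
  rw [← RCLike.re_to_complex, ← RCLike.re_to_complex, inner_self_eq_norm_sq, inner_self_eq_norm_sq]
  nlinarith [norm_inner_le_norm (𝕜 := ℂ) (S x) (S y), sq_nonneg (‖S x‖ - ‖S y‖)]

theorem norm_circleAverage_smul_le {P : ℂ → H →L[ℂ] H} (hPc : ContinuousOn P (sphere 0 1))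
    (hP : ∀ z ∈ sphere (0 : ℂ) 1, 0 ≤ P z) (hP₁ : circleAverage P 0 1 = 1) {f : ℂ → ℂ}
    (hf : ContinuousOn f (sphere 0 1)) {M : ℝ} (hfM : ∀ z ∈ sphere (0 : ℂ) 1, ‖f z‖ ≤ M) :
    ‖circleAverage (fun z => f z • P z) 0 1‖ ≤ M := by
  have hM : 0 ≤ M := (norm_nonneg _).trans (hfM 1 (by simp))
  refine opNorm_le_of_re_inner_le hM fun x y hx hy => ?_
  let Φ (u v : H) : (H →L[ℂ] H) →L[ℝ] ℝ :=
    reCLM.comp (((innerSL ℂ v).comp (apply ℂ H u)).restrictScalars ℝ)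
  have hΦ : ∀ u v B, Φ u v B = re ⟪B u, v⟫_ℂ := fun u v B => inner_re_symm (𝕜 := ℂ) v (B u)
  let Ψ : (H →L[ℂ] H) →L[ℝ] ℝ := (M / 2) • (Φ x x + Φ y y)
  calc re ⟪circleAverage (fun z => f z • P z) 0 1 x, y⟫_ℂ
      = circleAverage (Φ x y ∘ fun z => f z • P z) 0 1 := by
        rw [← hΦ, (Φ x y).circleAverage_comp_comm (f := fun z => f z • P z)
          ((hf.smul hPc).circleIntegrable zero_le_one)]
    _ ≤ circleAverage (Ψ ∘ P) 0 1 := by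
        refine circleAverage_mono
          (((Φ x y).continuous.comp_continuousOn (hf.smul hPc)).circleIntegrable zero_le_one)
          ((Ψ.continuous.comp_continuousOn hPc).circleIntegrable zero_le_one) fun z hz => ?_
        rw [abs_one] at hz
        simp only [Function.comp_apply, hΦ, Ψ, smul_apply, add_apply, smul_eq_mul, inner_smul_left]
        calc re (conj (f z) * ⟪P z x, y⟫_ℂ) ≤ ‖f z‖ * ‖⟪P z x, y⟫_ℂ‖ := by
              simpa using re_le_norm (conj (f z) * ⟪P z x, y⟫_ℂ)
          _ ≤ M * ((re ⟪P z x, x⟫_ℂ + re ⟪P z y, y⟫_ℂ) / 2) :=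
              mul_le_mul (hfM z hz) (norm_inner_le_of_nonneg (hP z hz) x y) (norm_nonneg _) hM
          _ = M / 2 * (re ⟪P z x, x⟫_ℂ + re ⟪P z y, y⟫_ℂ) := by ring
    _ = Ψ 1 := by
        rw [Ψ.circleAverage_comp_comm (hPc.circleIntegrable zero_le_one), hP₁]
    _ = M := by simp [Ψ, hΦ, hx, hy]

end Hilbert

/-- Von Neumann's inequality for strict contractions:
`‖p(T)‖ ≤ sup_{|z| ≤ 1} |p(z)|` for every polynomial `p`. -/
theorem vonNeumann_inequality_strict_contraction
    {H : Type*} [NormedAddCommGroup H] [InnerProductSpace ℂ H] [CompleteSpace H]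
    (T : H →L[ℂ] H) (hT : ‖T‖ < 1) (p : Polynomial ℂ) :
    ‖Polynomial.aeval T p‖ ≤ sSup ((fun z : ℂ => ‖p.eval z‖) '' Metric.closedBall 0 1) := by
  have hbdd : BddAbove ((fun z : ℂ => ‖p.eval z‖) '' closedBall 0 1) :=
    (isCompact_closedBall 0 1).bddAbove_image (by fun_prop)
  rw [← circleAverage_eval_smul_operatorPoissonKernel hT p]
  refine norm_circleAverage_smul_le
    ((continuousOn_operatorPoissonKernel hT).mono sphere_subset_closedBall)
    (fun z hz => operatorPoissonKernel_nonneg hT (by simpa using hz))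
    (circleAverage_operatorPoissonKernel hT) p.continuous.continuousOn
    fun z hz => le_csSup hbdd ⟨z, sphere_subset_closedBall hz, rfl⟩
end
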